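/- Let M be a matroid on a ground set E of size k with rank function r, such that every subset of E of size at most d is independent and r(E) ≥ d + t for some integer t ≥ 0. For each 0 ≤ i ≤ k, let A_i be a uniformly random subset of E of size i. Then (1/(k+1)) · ∑_{i=0}^{k} 𝔼(r(A_i)) ≥ d + (t·(k − d + 1) − d(d+1)) / (2(k+1)). -/

import Mathlib

/-- The rank of a set `X` in a matroid `M`: the largest cardinality of an
independent subset of `X`. -/
noncomputable def matroidRank {α : Type*} (M : Matroid α) (X : Set α) : ℕ :=
  sSup {n : ℕ | ∃ I : Set α, I ⊆ X ∧ M.Indep I ∧ I.ncard = n}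

/-! The average rank `F i` of a uniformly random `i`-subset of `E` is concave in `i`: averaging
the submodular inequality `r(A) + r(A - x - y) ≤ r(A - x) + r(A - y)` over all `(m+2)`-sets `A`
and ordered pairs `x ≠ y` in `A` gives `F (m + 2) + F m ≤ 2 F (m + 1)`. The girth condition makes
`F i = i` for `i ≤ d`, and `F k = r(E) ≥ d + t`. Concavity gives `F j + F (d + k - j) ≥ F d + F k`,
so the sum of `F` over `[d, k]` is at least the trapezoid `(k - d + 1) (F d + F k) / 2`; adding
`∑_{i<d} i` gives the bound. -/

open Finset
open scoped BigOperators

section MatroidRank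

variable {α : Type*} (M : Matroid α) {X Y : Set α}

lemma matroidRank_eq_eRk (hX : X.Finite) : (matroidRank M X : ℕ∞) = M.eRk X := by
  have hfin : M.eRk X ≠ ⊤ := ((M.eRk_le_encard X).trans_lt hX.encard_lt_top).ne
  obtain ⟨I, hIX, hI, hIcard⟩ := Matroid.le_eRk_iff.1 (le_refl (M.eRk X))
  have hmax : IsGreatest {n : ℕ | ∃ I : Set α, I ⊆ X ∧ M.Indep I ∧ I.ncard = n}
      (M.eRk X).toNat := by
    refine ⟨⟨I, hIX, hI, by rw [Set.ncard, hIcard]⟩, ?_⟩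
    rintro _ ⟨J, hJX, hJ, rfl⟩
    exact ENat.toNat_le_toNat (hJ.encard_le_eRk_of_subset hJX) hfin
  rw [matroidRank, hmax.csSup_eq, ENat.natCast_toNat hfin]

lemma matroidRank_inter_add_matroidRank_union_le (hX : X.Finite) (hY : Y.Finite) :
    matroidRank M (X ∩ Y) + matroidRank M (X ∪ Y) ≤ matroidRank M X + matroidRank M Y := by
  have h := M.eRk_submod X Y
  rw [← matroidRank_eq_eRk M hX, ← matroidRank_eq_eRk M hY,
    ← matroidRank_eq_eRk M (hX.inter_of_left Y), ← matroidRank_eq_eRk M (hX.union hY)] at h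
  exact_mod_cast h

lemma Matroid.Indep.matroidRank_eq_ncard {M : Matroid α} (hI : M.Indep X) (hX : X.Finite) :
    matroidRank M X = X.ncard := by
  have h := matroidRank_eq_eRk M hX
  rw [hI.eRk_eq_encard, ← hX.cast_ncard_eq] at h
  exact_mod_cast h

lemma expect_matroidRank_powersetCard_of_indep {M : Matroid α} {E : Finset α} {i : ℕ}
    (hi : i ≤ #E) (hind : ∀ A ⊆ E, #A = i → M.Indep (A : Set α)) :
    𝔼 A ∈ E.powersetCard i, (matroidRank M A : ℚ) = i := by
  have hslice : ∀ A ∈ E.powersetCard i, (matroidRank M A : ℚ) = i := by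
    intro A hA
    rw [mem_powersetCard] at hA
    simp [(hind A hA.1 hA.2).matroidRank_eq_ncard A.finite_toSet, hA.2]
  rw [expect_congr rfl hslice, expect_const (powersetCard_nonempty.2 hi)]

end MatroidRank

lemma sum_range_natCast_mul_two {R : Type*} [CommRing R] (n : ℕ) :
    (∑ i ∈ range n, (i : R)) * 2 = n * (n - 1) := by
  induction n with
  | zero => simp
  | succ n ih => rw [sum_range_succ, add_mul, ih]; push_cast; ring

section ConcaveSequence

variable {G : ℕ → ℚ} {n : ℕ}

lemma sub_le_sub_of_concave (hG : ∀ j, j + 2 ≤ n → G (j + 2) + G j ≤ 2 * G (j + 1))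
    {i j : ℕ} (hij : i ≤ j) (hj : j + 1 ≤ n) : G (j + 1) - G j ≤ G (i + 1) - G i := by
  induction j, hij using Nat.le_induction with
  | base => exact le_rfl
  | succ j _ ih => linarith [hG j hj, ih (by omega)]

lemma add_le_add_reflect_of_concave (hG : ∀ j, j + 2 ≤ n → G (j + 2) + G j ≤ 2 * G (j + 1))
    {j : ℕ} (hj : j ≤ n) : G 0 + G n ≤ G j + G (n - j) := by
  have hleft : ∑ l ∈ range j, (G (l + 1) - G l) = G j - G 0 := sum_range_sub G j
  have hright : ∑ l ∈ range j, (G (n - j + l + 1) - G (n - j + l)) = G n - G (n - j) := by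
    simpa [← add_assoc, Nat.sub_add_cancel hj] using sum_range_sub (fun l => G (n - j + l)) j
  have hsteps : ∑ l ∈ range j, (G (n - j + l + 1) - G (n - j + l))
      ≤ ∑ l ∈ range j, (G (l + 1) - G l) :=
    sum_le_sum fun l hl => sub_le_sub_of_concave hG (by omega) (by simp at hl; omega)
  linarith

lemma mul_add_div_two_le_sum_of_concave
    (hG : ∀ j, j + 2 ≤ n → G (j + 2) + G j ≤ 2 * G (j + 1)) :
    (n + 1 : ℚ) * (G 0 + G n) / 2 ≤ ∑ j ∈ range (n + 1), G j := by
  have hreflect : ∑ j ∈ range (n + 1), G (n - j) = ∑ j ∈ range (n + 1), G j := by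
    simpa using sum_range_reflect G (n + 1)
  have hpairs : ∑ j ∈ range (n + 1), (G 0 + G n) ≤ ∑ j ∈ range (n + 1), (G j + G (n - j)) :=
    sum_le_sum fun j hj => add_le_add_reflect_of_concave hG (by simp at hj; omega)
  rw [sum_const, card_range, nsmul_eq_mul, sum_add_distrib, hreflect] at hpairs
  push_cast at hpairs
  linarith

lemma le_sum_range_of_concave_of_eq_self {F : ℕ → ℚ} {d k : ℕ} (hdk : d ≤ k)
    (hconcave : ∀ m, m + 2 ≤ k → F (m + 2) + F m ≤ 2 * F (m + 1)) (hlow : ∀ i ≤ d, F i = i) :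
    d * (d - 1) / 2 + (k - d + 1) * (d + F k) / 2 ≤ ∑ i ∈ range (k + 1), F i := by
  have htail := mul_add_div_two_le_sum_of_concave (G := fun j => F (d + j)) (n := k - d)
    fun j hj => hconcave (d + j) (by omega)
  simp only [add_zero, Nat.add_sub_cancel' hdk, hlow d le_rfl] at htail
  have hhead : ∑ i ∈ range d, F i = d * (d - 1) / 2 := by
    rw [sum_congr rfl fun i hi => hlow i (mem_range.1 hi).le]
    linear_combination sum_range_natCast_mul_two (R := ℚ) d / 2
  rw [show k + 1 = d + (k - d + 1) by omega, sum_range_add, hhead]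
  push_cast [hdk] at htail
  linarith

end ConcaveSequence

section SliceAverage

variable {α : Type*} [DecidableEq α] (E : Finset α)

lemma sum_powersetCard_succ_sum_erase (g : Finset α → ℚ) (j : ℕ) :
    ∑ A ∈ E.powersetCard (j + 1), ∑ x ∈ A, g (A.erase x)
      = ((#E - j : ℕ) : ℚ) * ∑ B ∈ E.powersetCard j, g B := by
  have hflags : ∑ A ∈ E.powersetCard (j + 1), ∑ x ∈ A, g (A.erase x)
      = ∑ B ∈ E.powersetCard j, ∑ _x ∈ E \ B, g B := by
    rw [sum_sigma', sum_sigma']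
    refine sum_nbij' (fun p => ⟨p.1.erase p.2, p.2⟩) (fun p => ⟨insert p.2 p.1, p.2⟩)
      ?_ ?_ ?_ ?_ fun _ _ => rfl
    · rintro ⟨A, x⟩ hp
      simp only [mem_sigma, mem_powersetCard] at hp ⊢
      obtain ⟨⟨hAE, hAcard⟩, hx⟩ := hp
      refine ⟨⟨(erase_subset _ _).trans hAE, by rw [card_erase_of_mem hx, hAcard]; rfl⟩, ?_⟩
      simp [hAE hx]
    · rintro ⟨B, x⟩ hp
      simp only [mem_sigma, mem_powersetCard, mem_sdiff] at hp ⊢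
      obtain ⟨⟨hBE, hBcard⟩, hx, hxB⟩ := hp
      exact ⟨⟨insert_subset hx hBE, by rw [card_insert_of_notMem hxB, hBcard]⟩, mem_insert_self _ _⟩
    · rintro ⟨A, x⟩ hp
      simp only [mem_sigma] at hp
      simp [insert_erase hp.2]
    · rintro ⟨B, x⟩ hp
      simp only [mem_sigma, mem_sdiff] at hp
      simp [erase_insert hp.2.2]
  rw [hflags, mul_sum]
  refine sum_congr rfl fun B hB => ?_
  rw [mem_powersetCard] at hB
  rw [sum_const, card_sdiff_of_subset hB.1, hB.2, nsmul_eq_mul]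

lemma expect_powersetCard_succ_sum_erase (g : Finset α → ℚ) {j : ℕ} (hj : j < #E) :
    𝔼 A ∈ E.powersetCard (j + 1), ∑ x ∈ A, g (A.erase x)
      = (j + 1) * 𝔼 B ∈ E.powersetCard j, g B := by
  rw [expect_eq_sum_div_card, expect_eq_sum_div_card, sum_powersetCard_succ_sum_erase,
    card_powersetCard, card_powersetCard]
  have hchoose : ((#E).choose (j + 1) : ℚ) * (j + 1) = (#E).choose j * (#E - j : ℕ) := by
    exact_mod_cast Nat.choose_succ_right_eq #E j
  have hpos : (0 : ℚ) < (#E).choose (j + 1) := by exact_mod_cast Nat.choose_pos hj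
  have hpos' : (0 : ℚ) < (#E).choose j := by exact_mod_cast Nat.choose_pos hj.le
  rw [mul_div_assoc', div_eq_div_iff hpos.ne' hpos'.ne']
  linear_combination -(∑ B ∈ E.powersetCard j, g B) * hchoose

variable {g : Finset α → ℚ} (hg : ∀ A B : Finset α, g (A ∩ B) + g (A ∪ B) ≤ g A + g B)
include hg

lemma add_le_add_erase_of_submodular {A : Finset α} {x y : α} (hxy : x ≠ y) :
    g A + g ((A.erase x).erase y) ≤ g (A.erase x) + g (A.erase y) := by
  have hunion : A.erase x ∪ A.erase y = A := by
    ext z; simp only [mem_union, mem_erase]; constructor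
    · rintro (h | h) <;> exact h.2
    · intro hz; by_cases hzx : z = x
      · exact Or.inr ⟨hzx ▸ hxy, hz⟩
      · exact Or.inl ⟨hzx, hz⟩
  have hinter : A.erase x ∩ A.erase y = (A.erase x).erase y := by
    ext z; simp only [mem_inter, mem_erase]; tauto
  have h := hg (A.erase x) (A.erase y)
  rw [hunion, hinter] at h
  linarith

lemma sum_erase_erase_le_of_submodular {A : Finset α} {m : ℕ} (hA : #A = m + 2) :
    (m + 2) * (m + 1) * g A + ∑ x ∈ A, ∑ y ∈ A.erase x, g ((A.erase x).erase y)
      ≤ 2 * (m + 1) * ∑ x ∈ A, g (A.erase x) := by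
  have hrow : ∀ x ∈ A, (m + 1) * g A + ∑ y ∈ A.erase x, g ((A.erase x).erase y)
      ≤ (m + 1) * g (A.erase x) + (∑ y ∈ A, g (A.erase y) - g (A.erase x)) := by
    intro x hx
    have h : ∑ y ∈ A.erase x, (g A + g ((A.erase x).erase y))
        ≤ ∑ y ∈ A.erase x, (g (A.erase x) + g (A.erase y)) := sum_le_sum fun y hy =>
      add_le_add_erase_of_submodular hg (ne_of_mem_erase hy).symm
    rw [sum_add_distrib, sum_add_distrib, sum_const, sum_const,
      sum_erase_eq_sub (f := fun y => g (A.erase y)) hx, card_erase_of_mem hx, hA, nsmul_eq_mul,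
      nsmul_eq_mul] at h
    push_cast at h
    linarith
  have h := sum_le_sum hrow
  rw [sum_add_distrib, sum_add_distrib, sum_sub_distrib, sum_const, sum_const, hA, ← mul_sum,
    nsmul_eq_mul, nsmul_eq_mul] at h
  push_cast at h
  linarith

lemma expect_powersetCard_concave_of_submodular {m : ℕ} (hm : m + 2 ≤ #E) :
    𝔼 A ∈ E.powersetCard (m + 2), g A + 𝔼 A ∈ E.powersetCard m, g A
      ≤ 2 * 𝔼 A ∈ E.powersetCard (m + 1), g A := by
  have h := expect_le_expect (s := E.powersetCard (m + 2)) fun A hA =>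
    sum_erase_erase_le_of_submodular hg (m := m) (mem_powersetCard.1 hA).2
  rw [expect_add_distrib, ← mul_expect, ← mul_expect,
    expect_powersetCard_succ_sum_erase E g (by omega),
    expect_powersetCard_succ_sum_erase E (fun C => ∑ y ∈ C, g (C.erase y)) (by omega),
    expect_powersetCard_succ_sum_erase E g (by omega)] at h
  push_cast at h
  have hpos : (0 : ℚ) < (m + 2) * (m + 1) := by positivity
  nlinarith

end SliceAverage

theorem stmt_6_general {α : Type*} (M : Matroid α) (E : Finset α)
    (hE : M.E = ↑E) (d t k : ℕ) (hk : E.card = k) (hdk : d ≤ k)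
    (hgirth : ∀ I : Set α, I ⊆ M.E → I.ncard ≤ d → M.Indep I)
    (hrank : d + t ≤ matroidRank M M.E) :
    (d : ℚ) + ((t : ℚ) * ((k : ℚ) - d + 1) - (d : ℚ) * (d + 1)) / (2 * ((k : ℚ) + 1)) ≤
      (1 / ((k : ℚ) + 1)) * ∑ i ∈ Finset.range (k + 1),
        (∑ A ∈ E.powersetCard i, (matroidRank M ↑A : ℚ)) /
          ((E.powersetCard i).card : ℚ) := by
  classical
  subst hk
  set F : ℕ → ℚ := fun i => 𝔼 A ∈ E.powersetCard i, (matroidRank M ↑A : ℚ) with hF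
  have hlow : ∀ i ≤ d, F i = i := fun i hi =>
    expect_matroidRank_powersetCard_of_indep (hi.trans hdk) fun A hA hcard =>
      hgirth A (hE ▸ coe_subset.2 hA) (by simp [hcard, hi])
  have htop : (d + t : ℚ) ≤ F #E := by
    simp only [hF, powersetCard_self, expect_singleton, ← hE]
    exact_mod_cast hrank
  have hconcave : ∀ m, m + 2 ≤ #E → F (m + 2) + F m ≤ 2 * F (m + 1) := fun m hm =>
    expect_powersetCard_concave_of_submodular E (fun A B => by
      rw [coe_inter, coe_union]
      exact_mod_cast matroidRank_inter_add_matroidRank_union_le M A.finite_toSet B.finite_toSet) hm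
  have hbound := le_sum_range_of_concave_of_eq_self hdk hconcave hlow
  have hlen : (d : ℚ) ≤ #E := by exact_mod_cast hdk
  simp only [← expect_eq_sum_div_card]
  rw [one_div, ← div_eq_inv_mul, le_div_iff₀ (by positivity)]
  field_simp
  nlinarith [mul_le_mul_of_nonneg_left htop (by linarith : (0 : ℚ) ≤ #E - d + 1)]

/-- For a matroid on a ground set of size `k` with girth at least `d+1`
and rank at least `d + t`, the average over `i = 0, …, k` of the expected rank of a
uniformly random subset of size `i` is at least
`d + (t (k - d + 1) - d (d+1)) / (2 (k+1))`. -/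
theorem stmt_6 {α : Type*} [DecidableEq α] (M : Matroid α) (E : Finset α)
    (hE : M.E = ↑E) (d t k : ℕ) (hk : E.card = k) (hdk : d ≤ k)
    (hgirth : ∀ I : Set α, I ⊆ M.E → I.ncard ≤ d → M.Indep I)
    (hrank : d + t ≤ matroidRank M M.E) :
    (d : ℚ) + ((t : ℚ) * ((k : ℚ) - d + 1) - (d : ℚ) * (d + 1)) / (2 * ((k : ℚ) + 1)) ≤
      (1 / ((k : ℚ) + 1)) * ∑ i ∈ Finset.range (k + 1),
        (∑ A ∈ E.powersetCard i, (matroidRank M ↑A : ℚ)) /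
          ((E.powersetCard i).card : ℚ) :=
  stmt_6_general M E hE d t k hk hdk hgirth hrank
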